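/- arXiv:math/0605761 — 3 statements merged into one kernel-verified Lean document; each statement's English description precedes it below -/
import Mathlib

section
/- Let k ≥ 4 be an integer and let z ≥ r_k = arsinh(cot(π/k)). Then the region {(x,y) ∈ ℝ² : 0 < x < tan(π/k), −1/x ≤ y < −tan(π/k), and D(x,y) ≤ z} coincides with {(x,y) ∈ ℝ² : 0 < x < tan(π/k), −1/x ≤ y < −tan(π/k)}, and the Lebesgue double integral of (x − y)^{−2} over it equals log(2·cos(π/k)). -/
open Real MeasureTheory

/-- The geodesic of the upper half-plane with endpoints `x` and `y` at infinity:
the Euclidean semicircle with center `(x+y)/2` and radius `|x-y|/2`. -/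
def geodesicUHP (x y : ℝ) : Set UpperHalfPlane :=
  {w : UpperHalfPlane | ‖(w : ℂ) - (((x + y) / 2 : ℝ) : ℂ)‖ = |x - y| / 2}

/-- The hyperbolic distance from the point `i` of the upper half-plane to the geodesic
with endpoints `x`, `y` at infinity. -/
noncomputable def D (x y : ℝ) : ℝ :=
  Metric.infDist UpperHalfPlane.I (geodesicUHP x y)


lemma aux1 (A B C E : ℝ) (hE : E ≠ 0) (h : A^2 + B^2 = C^2*E^2) :
    (A/E)*(A/E) + (B/E)*(B/E) = C^2 := by
  field_simp
  linear_combination h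

lemma aux2 (P E d F : ℝ) (hE : E ≠ 0) (hd : d ≠ 0) (hF : F ≠ 0) (h : P = F^2*E) :
    (P/E^2)/(d*F/E) = F/d := by
  subst h; field_simp

lemma circle_id (x y m d F E : ℝ) (hm : m = 1 + x*y) (hd : d = x - y)
    (hF2 : F^2 = m^2 + d^2) (hE : E = m + d^2/2) (hEne : E ≠ 0) :
    ((x+y)/2 * m / E - (x+y)/2) * ((x+y)/2 * m / E - (x+y)/2)
      + (d * F / (2*E)) * (d * F / (2*E)) = (d/2)^2 := by
  have h1 : (x+y)/2 * m / E - (x+y)/2 = ((x+y)/2 * (m - E)) / E := by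
    field_simp
  have h2 : d * F / (2*E) = (d * F / 2) / E := by ring
  rw [h1, h2]
  refine aux1 _ _ _ _ hEne ?_
  subst hm hd hE
  linear_combination ((x-y)^2/4) * hF2

lemma cosh_id (x y m d F E : ℝ) (hm : m = 1 + x*y) (hd : d = x - y)
    (hF2 : F^2 = m^2 + d^2) (hE : E = m + d^2/2) (hEne : E ≠ 0) (hdne : d ≠ 0)
    (hFne : F ≠ 0) :
    ((0 - (x+y)/2 * m / E)^2 + 1^2 + (d * F / (2*E))^2) / (2 * 1 * (d * F / (2*E))) = F / d := by
  have h3 : (0 - (x+y)/2 * m / E)^2 + 1^2 + (d * F / (2*E))^2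
      = (((x+y)/2*m)^2 + E^2 + (d*F/2)^2)/E^2 := by
    field_simp; ring
  have h4 : (2 * 1 * (d * F / (2*E))) = d*F/E := by ring
  rw [h3, h4]
  refine aux2 _ _ _ _ hEne hdne hFne ?_
  subst hm hd hE
  linear_combination ((x-y)^2/4 - (1+x*y+(x-y)^2/2)) * hF2

lemma D_le {θ x y : ℝ} (hθ : 0 < θ) (hθ2 : θ < π/2)
    (hx : 0 < x) (hy1 : -1/x ≤ y) (hy2 : y < -Real.tan θ) :
    D x y ≤ Real.arsinh (Real.cot θ) := by
  have hs : 0 < Real.sin θ := Real.sin_pos_of_pos_of_lt_pi hθ (by linarith [pi_pos])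
  have hc : 0 < Real.cos θ := Real.cos_pos_of_mem_Ioo ⟨by linarith [pi_pos], hθ2⟩
  have hpyth : Real.sin θ^2 + Real.cos θ^2 = 1 := sin_sq_add_cos_sq θ
  have hyc : y * Real.cos θ < -Real.sin θ := by
    rw [Real.tan_eq_sin_div_cos] at hy2
    calc y * Real.cos θ < (-(Real.sin θ/Real.cos θ)) * Real.cos θ :=
          mul_lt_mul_of_pos_right hy2 hc
    _ = -Real.sin θ := by field_simp
  have hm : 0 ≤ 1 + x*y := by
    have := (div_le_iff₀ hx).mp hy1
    nlinarith
  have hy0 : y < 0 := by nlinarith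
  have hd : 0 < x - y := by linarith
  have hkey : Real.sin θ * (1 + x*y) ≤ Real.cos θ * (x - y) := by
    nlinarith [mul_pos hx hs, mul_pos hx hc]
  obtain ⟨m, hmdef⟩ : ∃ m, m = 1 + x*y := ⟨_, rfl⟩
  obtain ⟨d, hddef⟩ : ∃ d, d = x - y := ⟨_, rfl⟩
  have hm' : 0 ≤ m := hmdef ▸ hm
  have hd' : 0 < d := hddef ▸ hd
  obtain ⟨F, hFdef⟩ : ∃ F, F = Real.sqrt (m^2 + d^2) := ⟨_, rfl⟩
  have hF2 : F^2 = m^2 + d^2 := by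
    rw [hFdef]; exact Real.sq_sqrt (by positivity)
  have hFpos : 0 < F := by
    rw [hFdef]; exact Real.sqrt_pos.2 (by positivity)
  obtain ⟨E, hEdef⟩ : ∃ E, E = m + d^2/2 := ⟨_, rfl⟩
  have hEpos : 0 < E := by
    have : 0 < d^2 := by positivity
    rw [hEdef]; linarith
  have hwim : (0:ℝ) < d * F / (2*E) := by positivity
  set w : UpperHalfPlane := ⟨⟨(x+y)/2 * m / E, d * F / (2*E)⟩, hwim⟩ with hwdef
  have hmem : w ∈ geodesicUHP x y := by
    show ‖((⟨(x+y)/2 * m / E, d * F / (2*E)⟩ - (((x+y)/2 : ℝ) : ℂ)) : ℂ)‖ = |x - y| / 2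
    rw [Complex.norm_def, Complex.normSq_apply]
    have h1 : ((⟨(x+y)/2 * m / E, d * F / (2*E)⟩ - (((x+y)/2 : ℝ) : ℂ)) : ℂ).re
        = (x+y)/2 * m / E - (x+y)/2 := by simp
    have h2 : ((⟨(x+y)/2 * m / E, d * F / (2*E)⟩ - (((x+y)/2 : ℝ) : ℂ)) : ℂ).im
        = d * F / (2*E) := by simp
    rw [h1, h2, circle_id x y m d F E hmdef hddef hF2 hEdef (ne_of_gt hEpos),
      Real.sqrt_sq (by positivity), abs_of_pos hd, hddef]
  have hcosh : Real.cosh (dist UpperHalfPlane.I w) = F / d := by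
    rw [UpperHalfPlane.cosh_dist']
    have hire : UpperHalfPlane.I.re = 0 := by
      simp [UpperHalfPlane.I, UpperHalfPlane.re]
    have hiim : UpperHalfPlane.I.im = 1 := by
      simp [UpperHalfPlane.I, UpperHalfPlane.im]
    have hwre2 : w.re = (x+y)/2 * m / E := rfl
    have hwim2 : w.im = d * F / (2*E) := rfl
    rw [hire, hiim, hwre2, hwim2]
    have := cosh_id x y m d F E hmdef hddef hF2 hEdef (ne_of_gt hEpos) (ne_of_gt hd')
      (ne_of_gt hFpos)
    exact this
  have harsinh0 : 0 ≤ Real.cot θ := by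
    rw [Real.cot_eq_cos_div_sin]; positivity
  have hcosharsinh : Real.cosh (Real.arsinh (Real.cot θ)) = 1/Real.sin θ := by
    rw [Real.cosh_arsinh, Real.cot_eq_cos_div_sin]
    rw [show 1 + (Real.cos θ/Real.sin θ)^2 = (1/Real.sin θ)^2 by field_simp; exact hpyth]
    exact Real.sqrt_sq (by positivity)
  have hsF : Real.sin θ * F ≤ d := by
    have hkey' : Real.sin θ * m ≤ Real.cos θ * d := by rw [hmdef, hddef]; exact hkey
    nlinarith [hF2, mul_nonneg hs.le hm', mul_nonneg hc.le hd'.le, mul_pos hs hFpos]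
  have hdist : dist UpperHalfPlane.I w ≤ Real.arsinh (Real.cot θ) := by
    have h1 : Real.cosh (dist UpperHalfPlane.I w) ≤ Real.cosh (Real.arsinh (Real.cot θ)) := by
      rw [hcosh, hcosharsinh, div_le_div_iff₀ hd' hs]
      linarith
    have := Real.cosh_le_cosh.mp h1
    rwa [abs_of_nonneg dist_nonneg, abs_of_nonneg (Real.arsinh_nonneg_iff.2 harsinh0)] at this
  exact le_trans (Metric.infDist_le_dist_of_mem hmem) hdist

section Part2
open Set

-- inner integral
lemma inner_calc {a x : ℝ} (ha : 0 < a) (ha1 : a ≤ 1) (hx : 0 < x) (hxa : x < a) :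
    ∫ y in Ico (-1/x) (-a), 1/(x-y)^2 = (x+a)⁻¹ - x/(x^2+1) := by
  have hlt : -1/x < -a := by
    rw [neg_div, neg_lt_neg_iff, lt_div_iff₀ hx]
    nlinarith
  have hne : ∀ y ∈ Set.uIcc (-1/x) (-a), x - y ≠ 0 := by
    intro y hy
    rw [Set.uIcc_of_le hlt.le] at hy
    have : y ≤ -a := hy.2
    have : 0 < x - y := by linarith
    exact ne_of_gt this
  rw [MeasureTheory.integral_Ico_eq_integral_Ioo, ← MeasureTheory.integral_Ioc_eq_integral_Ioo,
    ← intervalIntegral.integral_of_le hlt.le]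
  have hFTC : ∫ y in (-1/x)..(-a), 1/(x-y)^2
      = (x - (-a))⁻¹ - (x - (-1/x))⁻¹ := by
    apply intervalIntegral.integral_eq_sub_of_hasDerivAt (f := fun t => (x - t)⁻¹)
    · intro t ht
      have h0 : x - t ≠ 0 := hne t ht
      have h1 : HasDerivAt (fun y : ℝ => x - y) (-1) t := (hasDerivAt_id t).const_sub x
      have := h1.inv h0
      exact this.congr_deriv (by ring)
    · apply ContinuousOn.intervalIntegrable
      apply ContinuousOn.div continuousOn_const
      · exact (continuousOn_const.sub continuousOn_id).pow 2
      · intro y hy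
        exact pow_ne_zero 2 (hne y hy)
  rw [hFTC]
  have h1 : x - (-1/x) = (x^2+1)/x := by field_simp; ring
  rw [h1, inv_div, sub_neg_eq_add]

lemma outer_calc {a : ℝ} (ha : 0 < a) :
    ∫ x in Ioo 0 a, ((x+a)⁻¹ - x/(x^2+1)) = Real.log 2 - Real.log (a^2+1)/2 := by
  have hpos : ∀ x ∈ Set.uIcc (0:ℝ) a, 0 < x + a := by
    intro x hx
    rw [Set.uIcc_of_le ha.le] at hx
    linarith [hx.1]
  rw [← MeasureTheory.integral_Ioc_eq_integral_Ioo, ← intervalIntegral.integral_of_le ha.le]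
  have hFTC : ∫ x in (0:ℝ)..a, ((x+a)⁻¹ - x/(x^2+1))
      = (Real.log (a+a) - Real.log (a^2+1)/2) - (Real.log (0+a) - Real.log (0^2+1)/2) := by
    apply intervalIntegral.integral_eq_sub_of_hasDerivAt
      (f := fun x => Real.log (x+a) - Real.log (x^2+1)/2)
    · intro t ht
      have h1 : HasDerivAt (fun x : ℝ => Real.log (x+a)) (1/(t+a)) t := by
        have := ((hasDerivAt_id t).add_const a).log (ne_of_gt (hpos t ht))
        simpa using this
      have h2 : HasDerivAt (fun x : ℝ => Real.log (x^2+1)/2) (t/(t^2+1)) t := by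
        have hne : t^2+1 ≠ 0 := by positivity
        have := (((hasDerivAt_pow 2 t).add_const 1).log hne).div_const 2
        exact this.congr_deriv (by push_cast; ring)
      have := h1.sub h2
      convert this using 1
      · rfl
      · rw [one_div]
    · apply ContinuousOn.intervalIntegrable
      apply ContinuousOn.sub
      · exact ContinuousOn.inv₀ (continuousOn_id.add continuousOn_const)
          (fun x hx => ne_of_gt (hpos x hx))
      · exact ContinuousOn.div continuousOn_id
          ((continuousOn_id.pow 2).add continuousOn_const)
          (fun x _ => by positivity)
  rw [hFTC]
  rw [show a + a = 2*a by ring, Real.log_mul two_ne_zero (ne_of_gt ha)]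
  norm_num
  ring

lemma fubini_calc {a : ℝ} (ha : 0 < a) (ha1 : a ≤ 1) :
    ∫ p : ℝ × ℝ in {p : ℝ × ℝ | 0 < p.1 ∧ p.1 < a ∧ -1/p.1 ≤ p.2 ∧ p.2 < -a},
      1/(p.1 - p.2)^2 = Real.log 2 - Real.log (a^2+1)/2 := by
  set S : Set (ℝ × ℝ) := {p : ℝ × ℝ | 0 < p.1 ∧ p.1 < a ∧ -1/p.1 ≤ p.2 ∧ p.2 < -a} with hSdef
  set f : ℝ × ℝ → ℝ := fun p => 1/(p.1 - p.2)^2 with hfdef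
  have hSm : MeasurableSet S := by
    apply MeasurableSet.inter
    · exact measurableSet_lt measurable_const measurable_fst
    apply MeasurableSet.inter
    · exact measurableSet_lt measurable_fst measurable_const
    apply MeasurableSet.inter
    · exact measurableSet_le (measurable_const.div measurable_fst) measurable_snd
    · exact measurableSet_lt measurable_snd measurable_const
  have hfm : Measurable f :=
    measurable_const.div ((measurable_fst.sub measurable_snd).pow_const 2)
  -- slice facts
  have hslice : ∀ x : ℝ, (fun y => S.indicator f (x, y))
      = if x ∈ Ioo 0 a then (Ico (-1/x) (-a)).indicator (fun y => 1/(x-y)^2) else 0 := by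
    intro x
    by_cases hx : x ∈ Ioo 0 a
    · rw [if_pos hx]
      funext y
      rw [Set.indicator_apply, Set.indicator_apply]
      have : ((x, y) ∈ S) ↔ (y ∈ Ico (-1/x) (-a)) := by
        simp only [hSdef, Set.mem_setOf_eq, Set.mem_Ico]
        constructor
        · rintro ⟨_, _, h3, h4⟩; exact ⟨h3, h4⟩
        · rintro ⟨h3, h4⟩; exact ⟨hx.1, hx.2, h3, h4⟩
      simp only [this, hfdef]
    · rw [if_neg hx]
      funext y
      rw [Set.indicator_of_notMem]
      · rfl
      · intro hmem
        exact hx ⟨hmem.1, hmem.2.1⟩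
  have hintOn : ∀ x ∈ Ioo (0:ℝ) a, IntegrableOn (fun y => 1/(x-y)^2) (Ico (-1/x) (-a)) := by
    intro x hx
    have hcont : ContinuousOn (fun y => 1/(x-y)^2) (Icc (-1/x) (-a)) := by
      apply ContinuousOn.div continuousOn_const
      · exact (continuousOn_const.sub continuousOn_id).pow 2
      · intro y hy
        have : 0 < x - y := by
          have := hy.2
          have := hx.1
          nlinarith
        positivity
    exact (hcont.integrableOn_Icc).mono_set Ico_subset_Icc_self
  have hinner : ∀ x : ℝ, (∫ y, S.indicator f (x, y))
      = (Ioo 0 a).indicator (fun x => (x+a)⁻¹ - x/(x^2+1)) x := by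
    intro x
    by_cases hx : x ∈ Ioo 0 a
    · rw [hslice x, if_pos hx, Set.indicator_of_mem hx,
        MeasureTheory.integral_indicator measurableSet_Ico]
      exact inner_calc ha ha1 hx.1 hx.2
    · rw [hslice x, if_neg hx, Set.indicator_of_notMem hx]
      exact integral_zero _ _
  have houter_int : IntegrableOn (fun x => (x+a)⁻¹ - x/(x^2+1)) (Ioo 0 a) := by
    have hcont : ContinuousOn (fun x => (x+a)⁻¹ - x/(x^2+1)) (Icc 0 a) := by
      apply ContinuousOn.sub
      · exact ContinuousOn.inv₀ (continuousOn_id.add continuousOn_const)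
          (fun x hx => by have := hx.1; positivity)
      · exact ContinuousOn.div continuousOn_id
          ((continuousOn_id.pow 2).add continuousOn_const)
          (fun x _ => by positivity)
    exact (hcont.integrableOn_Icc).mono_set Ioo_subset_Icc_self
  have hint : Integrable (S.indicator f) (volume.prod volume) := by
    rw [MeasureTheory.integrable_prod_iff ((hfm.indicator hSm).aestronglyMeasurable)]
    constructor
    · apply Filter.Eventually.of_forall
      intro x
      rw [hslice x]
      by_cases hx : x ∈ Ioo 0 a
      · rw [if_pos hx]
        exact (integrable_indicator_iff measurableSet_Ico).2 (hintOn x hx)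
      · rw [if_neg hx]
        exact integrable_zero _ _ _
    · have hnn : ∀ p : ℝ × ℝ, 0 ≤ S.indicator f p := by
        intro p
        apply Set.indicator_nonneg
        intro q _
        positivity
      have : (fun x => ∫ y, ‖S.indicator f (x, y)‖)
          = (Ioo 0 a).indicator (fun x => (x+a)⁻¹ - x/(x^2+1)) := by
        funext x
        rw [← hinner x]
        congr 1
        funext y
        rw [Real.norm_eq_abs, abs_of_nonneg (hnn (x, y))]
      rw [this]
      exact (integrable_indicator_iff measurableSet_Ioo).2 houter_int
  calc ∫ p in S, f p
      = ∫ p, S.indicator f p := (MeasureTheory.integral_indicator hSm).symm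
    _ = ∫ p, S.indicator f p ∂(volume.prod volume) := by rw [← MeasureTheory.Measure.volume_eq_prod]
    _ = ∫ x, ∫ y, S.indicator f (x, y) := MeasureTheory.integral_prod _ hint
    _ = ∫ x, (Ioo 0 a).indicator (fun x => (x+a)⁻¹ - x/(x^2+1)) x := by
        congr 1
        funext x
        exact hinner x
    _ = ∫ x in Ioo 0 a, ((x+a)⁻¹ - x/(x^2+1)) :=
        MeasureTheory.integral_indicator measurableSet_Ioo
    _ = Real.log 2 - Real.log (a^2+1)/2 := outer_calc ha

end Part2

/-- For `k ≥ 4` and `z ≥ r_k = arsinh (cot (π/k))`, the constraint `D x y ≤ z` is vacuous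
on the region `0 < x < tan (π/k)`, `-1/x ≤ y < -tan (π/k)`, and the integral of `(x-y)⁻²`
over this region equals `log (2 cos (π/k))`. -/
theorem LambdaStar_large (k : ℕ) (hk : 4 ≤ k) (z : ℝ)
    (hz : Real.arsinh (Real.cot (π / k)) ≤ z) :
    {p : ℝ × ℝ | 0 < p.1 ∧ p.1 < Real.tan (π / k) ∧
        -1 / p.1 ≤ p.2 ∧ p.2 < -Real.tan (π / k) ∧ D p.1 p.2 ≤ z} =
      {p : ℝ × ℝ | 0 < p.1 ∧ p.1 < Real.tan (π / k) ∧
        -1 / p.1 ≤ p.2 ∧ p.2 < -Real.tan (π / k)} ∧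
    ∫ p : ℝ × ℝ in {p : ℝ × ℝ | 0 < p.1 ∧ p.1 < Real.tan (π / k) ∧
        -1 / p.1 ≤ p.2 ∧ p.2 < -Real.tan (π / k) ∧ D p.1 p.2 ≤ z},
        1 / (p.1 - p.2) ^ 2 =
      Real.log (2 * Real.cos (π / k)) := by
  have hk4 : (4:ℝ) ≤ (k:ℝ) := by exact_mod_cast hk
  have hkpos : (0:ℝ) < (k:ℝ) := by linarith
  have hθpos : 0 < π / k := by positivity
  have hθ4 : π / k ≤ π / 4 :=
    div_le_div_of_nonneg_left pi_pos.le (by norm_num) hk4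
  have hθlt : π / k < π / 2 := lt_of_le_of_lt hθ4 (by linarith [pi_pos])
  have hcos : 0 < Real.cos (π / k) :=
    Real.cos_pos_of_mem_Ioo ⟨by linarith, hθlt⟩
  have ha : 0 < Real.tan (π / k) := Real.tan_pos_of_pos_of_lt_pi_div_two hθpos hθlt
  have ha1 : Real.tan (π / k) ≤ 1 := by
    have h2 : π / 4 < π / 2 := by linarith [pi_pos]
    have := Real.strictMonoOn_tan.monotoneOn
      (⟨by linarith, hθlt⟩ : π / k ∈ Set.Ioo (-(π/2)) (π/2))
      (⟨by linarith, h2⟩ : π / 4 ∈ Set.Ioo (-(π/2)) (π/2)) hθ4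
    rwa [Real.tan_pi_div_four] at this
  have hsets : {p : ℝ × ℝ | 0 < p.1 ∧ p.1 < Real.tan (π / k) ∧
        -1 / p.1 ≤ p.2 ∧ p.2 < -Real.tan (π / k) ∧ D p.1 p.2 ≤ z} =
      {p : ℝ × ℝ | 0 < p.1 ∧ p.1 < Real.tan (π / k) ∧
        -1 / p.1 ≤ p.2 ∧ p.2 < -Real.tan (π / k)} := by
    ext p
    simp only [Set.mem_setOf_eq]
    constructor
    · rintro ⟨h1, h2, h3, h4, _⟩
      exact ⟨h1, h2, h3, h4⟩
    · rintro ⟨h1, h2, h3, h4⟩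
      exact ⟨h1, h2, h3, h4, le_trans (D_le hθpos hθlt h1 h3 h4) hz⟩
  refine ⟨hsets, ?_⟩
  rw [hsets, fubini_calc ha ha1]
  have htan : Real.tan (π / k)^2 + 1 = (Real.cos (π / k)^2)⁻¹ := by
    rw [Real.tan_eq_sin_div_cos]
    field_simp
    exact sin_sq_add_cos_sq _
  rw [htan, Real.log_inv, Real.log_pow, Real.log_mul two_ne_zero (ne_of_gt hcos)]
  push_cast
  ring
end

section
/- Let k ≥ 3 be an integer and let z satisfy 0 < z ≤ r_k = arsinh(cot(π/k)). Then the iterated integral ∫₀^{tan(π/k)} ( ∫_{−1/x}^{W_z(x)} (x − y)^{−2} dy ) dx equals (π/k)·sinh z, where W_z(x) = (x·sinh z − 1)/(x + sinh z). -/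
open Real

/-- For `k ≥ 3` and `0 < z ≤ r_k = arsinh (cot (π/k))`, the iterated integral
`∫₀^{tan (π/k)} ∫_{-1/x}^{W_z(x)} (x-y)⁻² dy dx` equals `(π/k) · sinh z`, where
`W_z(x) = (x sinh z - 1)/(x + sinh z)`. -/
theorem iterated_integral_small (k : ℕ) (hk : 3 ≤ k) (z : ℝ) (hz0 : 0 < z)
    (hz : z ≤ Real.arsinh (Real.cot (π / k))) :
    ∫ x in (0 : ℝ)..Real.tan (π / k),
        ∫ y in (-1 / x)..((x * Real.sinh z - 1) / (x + Real.sinh z)),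
          1 / (x - y) ^ 2 =
      π / k * Real.sinh z := by
  set s := Real.sinh z with hs
  have hspos : 0 < s := Real.sinh_pos_iff.mpr hz0
  have hk3 : (3 : ℝ) ≤ (k : ℝ) := by exact_mod_cast hk
  have hkpos : (0 : ℝ) < (k : ℝ) := by linarith
  have hpk0 : 0 < π / k := div_pos Real.pi_pos hkpos
  have hpk2 : π / k < π / 2 := by
    have h3 : π / (k : ℝ) ≤ π / 3 := by gcongr
    have := Real.pi_pos
    nlinarith
  have hT : 0 < Real.tan (π / k) := Real.tan_pos_of_pos_of_lt_pi_div_two hpk0 hpk2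
  have key : ∀ x : ℝ, 0 < x →
      (∫ y in (-1 / x)..((x * s - 1) / (x + s)), 1 / (x - y) ^ 2)
        = s * (1 + x ^ 2)⁻¹ := by
    intro x hx
    have hxs : 0 < x + s := by linarith
    have hb : (x * s - 1) / (x + s) < x := by
      rw [div_lt_iff₀ hxs]; nlinarith
    have ha : -1 / x < x := by
      rw [neg_div]
      have := one_div_pos.mpr hx
      linarith
    have hsub : ∀ y ∈ Set.uIcc (-1 / x) ((x * s - 1) / (x + s)), x - y ≠ 0 := by
      intro y hy
      rcases Set.mem_uIcc.mp hy with ⟨h1, h2⟩ | ⟨h1, h2⟩ <;> · intro h; nlinarith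
    have hderiv : ∀ y ∈ Set.uIcc (-1 / x) ((x * s - 1) / (x + s)),
        HasDerivAt (fun y => (x - y)⁻¹) (1 / (x - y) ^ 2) y := by
      intro y hy
      have hne : x - y ≠ 0 := hsub y hy
      have h1 : HasDerivAt (fun y : ℝ => x - y) (-1) y := (hasDerivAt_id y).const_sub x
      have h2 := h1.inv hne
      exact h2.congr_deriv (by ring)
    have hcont : ContinuousOn (fun y => 1 / (x - y) ^ 2)
        (Set.uIcc (-1 / x) ((x * s - 1) / (x + s))) := by
      apply ContinuousOn.div continuousOn_const
      · exact (continuousOn_const.sub continuousOn_id).pow 2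
      · intro y hy; exact pow_ne_zero 2 (hsub y hy)
    rw [intervalIntegral.integral_eq_sub_of_hasDerivAt hderiv hcont.intervalIntegrable]
    have hxb : x - (x * s - 1) / (x + s) = (x ^ 2 + 1) / (x + s) := by
      field_simp; ring
    have hxa : x - (-1 / x) = (x ^ 2 + 1) / x := by
      field_simp; ring
    rw [hxb, hxa]
    have hx21 : (0 : ℝ) < x ^ 2 + 1 := by positivity
    field_simp
    ring
  have hcongr : ∀ᵐ x ∂MeasureTheory.volume, x ∈ Set.uIoc (0 : ℝ) (Real.tan (π / k)) →
      (∫ y in (-1 / x)..((x * s - 1) / (x + s)), 1 / (x - y) ^ 2)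
        = s * (1 + x ^ 2)⁻¹ := by
    filter_upwards with x hx
    rw [Set.uIoc_of_le hT.le] at hx
    exact key x hx.1
  rw [intervalIntegral.integral_congr_ae hcongr, intervalIntegral.integral_const_mul]
  have : (∫ x in (0 : ℝ)..Real.tan (π / k), (1 + x ^ 2)⁻¹) = π / k := by
    simp only [← one_div]
    rw [integral_one_div_one_add_sq, Real.arctan_tan (by linarith) hpk2, Real.arctan_zero,
      sub_zero]
  rw [this]; ring
end

section
/- Let k ≥ 3 be an integer and let z > r_k = arsinh(cot(π/k)). Then ∫₀^{1/sinh z} ( ∫_{−1/x}^{W_z(x)} (x − y)^{−2} dy ) dx + ∫_{1/sinh z}^{tan(π/k)} ( ∫_{−1/x}^{0} (x − y)^{−2} dy ) dx = sinh z · arctan(1/sinh z) + log(sin(π/k)·cosh z), where W_z(x) = (x·sinh z − 1)/(x + sinh z). -/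
open Real

lemma inner_int (x a b : ℝ) (h : ∀ y ∈ Set.uIcc a b, x - y ≠ 0) :
    ∫ y in a..b, 1 / (x - y) ^ 2 = 1 / (x - b) - 1 / (x - a) := by
  have hderiv : ∀ y ∈ Set.uIcc a b,
      HasDerivAt (fun y => (x - y)⁻¹) (1 / (x - y) ^ 2) y := by
    intro y hy
    have h1 : HasDerivAt (fun y : ℝ => x - y) (-1) y := by
      simpa using (hasDerivAt_id y).const_sub x
    exact (h1.inv (h y hy)).congr_deriv (by ring)
  have hcont : ContinuousOn (fun y => 1 / (x - y) ^ 2) (Set.uIcc a b) := by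
    apply ContinuousOn.div continuousOn_const
    · exact ((continuousOn_const.sub continuousOn_id).pow 2)
    · intro y hy; exact pow_ne_zero 2 (h y hy)
  have := intervalIntegral.integral_eq_sub_of_hasDerivAt hderiv
    hcont.intervalIntegrable
  simpa [one_div] using this

/-- For `k ≥ 3` and `z > r_k = arsinh (cot (π/k))`, the sum of the two iterated integrals
`∫₀^{1/sinh z} ∫_{-1/x}^{W_z(x)} (x-y)⁻² dy dx` and
`∫_{1/sinh z}^{tan (π/k)} ∫_{-1/x}^{0} (x-y)⁻² dy dx` equals
`sinh z · arctan (1/sinh z) + log (sin (π/k) · cosh z)`, where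
`W_z(x) = (x sinh z - 1)/(x + sinh z)`. -/
theorem iterated_integral_large (k : ℕ) (hk : 3 ≤ k) (z : ℝ)
    (hz : Real.arsinh (Real.cot (π / k)) < z) :
    (∫ x in (0 : ℝ)..(1 / Real.sinh z),
        ∫ y in (-1 / x)..((x * Real.sinh z - 1) / (x + Real.sinh z)),
          1 / (x - y) ^ 2) +
      (∫ x in (1 / Real.sinh z)..Real.tan (π / k),
        ∫ y in (-1 / x)..(0 : ℝ), 1 / (x - y) ^ 2) =
      Real.sinh z * Real.arctan (1 / Real.sinh z) +
        Real.log (Real.sin (π / k) * Real.cosh z) := by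
  set s := Real.sinh z with hs_def
  have hk3 : (3 : ℝ) ≤ (k : ℝ) := by exact_mod_cast hk
  have hk0 : (0 : ℝ) < (k : ℝ) := by linarith
  have hπk : 0 < π / k := div_pos pi_pos hk0
  have hπk2 : π / k < π / 2 := by
    have h1 : π / (k : ℝ) ≤ π / 3 :=
      div_le_div_of_nonneg_left pi_pos.le (by norm_num) hk3
    have := pi_pos
    linarith
  have hsin : 0 < Real.sin (π / k) :=
    Real.sin_pos_of_pos_of_lt_pi hπk (by linarith [pi_pos])
  have hcos : 0 < Real.cos (π / k) :=
    Real.cos_pos_of_mem_Ioo ⟨by linarith, hπk2⟩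
  have hcot : Real.cot (π / k) = Real.cos (π / k) / Real.sin (π / k) :=
    Real.cot_eq_cos_div_sin _
  have hcot0 : 0 < Real.cot (π / k) := by rw [hcot]; positivity
  have hs : Real.cot (π / k) < s := by
    have := Real.sinh_lt_sinh.mpr hz
    simpa [Real.sinh_arsinh] using this
  have hs0 : 0 < s := lt_trans hcot0 hs
  have htan : Real.tan (π / k) = Real.sin (π / k) / Real.cos (π / k) :=
    Real.tan_eq_sin_div_cos _
  have htan0 : 0 < Real.tan (π / k) := by rw [htan]; positivity
  have hst : 1 / s < Real.tan (π / k) := by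
    rw [htan, div_lt_div_iff₀ hs0 hcos]
    have h1 : Real.cos (π / k) < s * Real.sin (π / k) := by
      rw [hcot, div_lt_iff₀ hsin] at hs
      linarith
    linarith
  -- First integral
  have I1 : (∫ x in (0 : ℝ)..(1 / s),
      ∫ y in (-1 / x)..((x * s - 1) / (x + s)), 1 / (x - y) ^ 2)
      = ∫ x in (0 : ℝ)..(1 / s), s * (1 / (1 + x ^ 2)) := by
    apply intervalIntegral.integral_congr_ae
    filter_upwards with x hx
    rw [Set.uIoc_of_le (by positivity : (0:ℝ) ≤ 1 / s)] at hx
    obtain ⟨hx0, hx1⟩ := hx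
    have hxs : 0 < x + s := by linarith
    have hxs1 : x * s ≤ 1 := by
      have h := mul_le_mul_of_nonneg_right hx1 hs0.le
      rwa [one_div, inv_mul_cancel₀ (ne_of_gt hs0)] at h
    have hW : (x * s - 1) / (x + s) ≤ 0 :=
      div_nonpos_of_nonpos_of_nonneg (by linarith) hxs.le
    have hA : -1 / x ≤ 0 := div_nonpos_of_nonpos_of_nonneg (by norm_num) hx0.le
    rw [inner_int x _ _ (by
      intro y hy
      have hy' : y ≤ 0 := le_trans (hy.2) (max_le hA hW)
      have : 0 < x - y := by linarith
      exact ne_of_gt this)]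
    have e1 : x - (x * s - 1) / (x + s) = (x ^ 2 + 1) / (x + s) := by
      field_simp; ring
    have e2 : x - -1 / x = (x ^ 2 + 1) / x := by
      field_simp; ring
    rw [e1, e2, one_div_div, one_div_div, div_sub_div_same, mul_one_div,
      show x + s - x = s from by ring, show x ^ 2 + 1 = 1 + x ^ 2 from by ring]
  have I1' : (∫ x in (0 : ℝ)..(1 / s), s * (1 / (1 + x ^ 2)))
      = s * Real.arctan (1 / s) := by
    rw [intervalIntegral.integral_const_mul, integral_one_div_one_add_sq]
    simp [Real.arctan_zero]
  -- Second integral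
  set t := Real.tan (π / k) with ht_def
  have I2 : (∫ x in (1 / s)..t, ∫ y in (-1 / x)..(0 : ℝ), 1 / (x - y) ^ 2)
      = ∫ x in (1 / s)..t, (1 / x - x / (1 + x ^ 2)) := by
    apply intervalIntegral.integral_congr_ae
    filter_upwards with x hx
    rw [Set.uIoc_of_le hst.le] at hx
    obtain ⟨hx0', hx1⟩ := hx
    have hx0 : 0 < x := lt_trans (by positivity) hx0'
    have hA : -1 / x ≤ 0 := div_nonpos_of_nonpos_of_nonneg (by norm_num) hx0.le
    rw [inner_int x _ _ (by
      intro y hy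
      have hy' : y ≤ 0 := le_trans (hy.2) (max_le hA le_rfl)
      have : 0 < x - y := by linarith
      exact ne_of_gt this)]
    have e2 : x - -1 / x = (x ^ 2 + 1) / x := by field_simp; ring
    rw [sub_zero, e2, one_div_div, show x ^ 2 + 1 = 1 + x ^ 2 from by ring]
  have I2' : (∫ x in (1 / s)..t, (1 / x - x / (1 + x ^ 2)))
      = (Real.log t - (1/2) * Real.log (1 + t ^ 2))
        - (Real.log (1 / s) - (1/2) * Real.log (1 + (1 / s) ^ 2)) := by
    have hderiv : ∀ x ∈ Set.uIcc (1 / s) t,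
        HasDerivAt (fun x => Real.log x - (1/2) * Real.log (1 + x ^ 2))
          (1 / x - x / (1 + x ^ 2)) x := by
      intro x hx
      rw [Set.uIcc_of_le hst.le] at hx
      have hx0 : 0 < x := lt_of_lt_of_le (by positivity) hx.1
      have h1 : HasDerivAt Real.log (1 / x) x := by
        simpa [one_div] using Real.hasDerivAt_log (ne_of_gt hx0)
      have hq : (0:ℝ) < 1 + x ^ 2 := by positivity
      have h2 : HasDerivAt (fun x : ℝ => 1 + x ^ 2) (2 * x) x := by
        simpa using ((hasDerivAt_pow 2 x).const_add 1)
      have h3 : HasDerivAt (fun x => Real.log (1 + x ^ 2)) (2 * x / (1 + x ^ 2)) x := by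
        have := (Real.hasDerivAt_log (ne_of_gt hq)).comp x h2
        exact this.congr_deriv (by ring)
      have h4 := h1.sub (h3.const_mul (1/2 : ℝ))
      exact h4.congr_deriv (by ring)
    have hcont : ContinuousOn (fun x : ℝ => 1 / x - x / (1 + x ^ 2))
        (Set.uIcc (1 / s) t) := by
      apply ContinuousOn.sub
      · apply ContinuousOn.div continuousOn_const continuousOn_id
        intro x hx
        rw [Set.uIcc_of_le hst.le] at hx
        exact ne_of_gt (lt_of_lt_of_le (by positivity) hx.1)
      · apply ContinuousOn.div continuousOn_id
          (continuousOn_const.add ((continuousOn_id).pow 2))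
        intro x hx
        exact ne_of_gt (by positivity : (0:ℝ) < 1 + x ^ 2)
    exact intervalIntegral.integral_eq_sub_of_hasDerivAt hderiv
      hcont.intervalIntegrable
  rw [I1, I1', I2, I2']
  congr 1
  -- log identities
  have hcosh : 0 < Real.cosh z := Real.cosh_pos z
  have hcosh2 : 1 + (1 / s) ^ 2 = (Real.cosh z / s) ^ 2 := by
    have hc2 : Real.cosh z ^ 2 = s ^ 2 + 1 := by rw [Real.cosh_sq, hs_def]
    rw [show (Real.cosh z / s) ^ 2 = Real.cosh z ^ 2 / s ^ 2 from div_pow _ _ _, hc2]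
    field_simp
  have htan2 : 1 + t ^ 2 = (1 / Real.cos (π / k)) ^ 2 := by
    show 1 + Real.tan (π / k) ^ 2 = (1 / Real.cos (π / k)) ^ 2
    rw [Real.tan_eq_sin_div_cos]
    field_simp
    linarith [Real.sin_sq_add_cos_sq (π / (k:ℝ))]
  rw [hcosh2, htan2, Real.log_pow, Real.log_pow]
  push_cast
  rw [Real.log_div (ne_of_gt hcosh) (ne_of_gt hs0),
    Real.log_div one_ne_zero (ne_of_gt hcos),
    Real.log_div one_ne_zero (ne_of_gt hs0),
    show Real.log t = Real.log (Real.sin (π / k) / Real.cos (π / k)) from by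
      rw [htan],
    Real.log_div (ne_of_gt hsin) (ne_of_gt hcos),
    Real.log_mul (ne_of_gt hsin) (ne_of_gt hcosh)]
  simp [Real.log_one]
  ring
end
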